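/- Let F be a field and let (P,B,I) be the affine plane over F, with (F,+) acting on F by addition. Define the gain function φ by φ({L_b,(b,y)}) = -by and φ({L_{m,b},(x,mx+b)}) = xb. Then the incidence structure 𝔐(Γ,φ) obtained from Construction 𝔐 is a generalized quadrangle. -/

import Mathlib

/-!
A generalized quadrangle is a partial linear space in which every point `p` off a line `b` is
collinear with exactly one point of `b` (its projection); together with "every point is on a line
and every line has a point" this gives both the diameter bound and the uniqueness of short chains.

For Construction 𝔐 over a linear space, partial linearity and most projections come for free:
on `z_{q,μ}` the only point collinear with `x_p` (`p ≠ q`) is the `y` over the line `pq`, and if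
`q ∈ L` the only point collinear with `y_{L,λ}` is `x_q`. For `q ∉ L` the points of `z_{q,μ}`
collinear with `y_{L,λ}` are the `y_{M,μ - φ(Mq)}` with `M = rq` for the `r ∈ L` satisfying
`ρ_{L,q}(r) = μ - λ`, so there is exactly one when `ρ_{L,q}` is a bijection from the points of `L`
onto the gain group. For the affine gain, `ρ_{L,q}` is an affine function of the coordinate of `r`
along `L`, with slope `q.1 - b` on `L_b` and `m q.1 + b - q.2` on `L_{m,b}`, both nonzero because
`q ∉ L`.
-/

open Classical

/-- An incidence structure: points `P`, lines `B`, incidence relation `inc`. -/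
structure IncStruct (P B : Type*) where
  inc : P → B → Prop

namespace IncStruct

variable {P B : Type*}

/-- Adjacency in the incidence graph on `P ⊕ B`. -/
def adj (S : IncStruct P B) : P ⊕ B → P ⊕ B → Prop
  | Sum.inl p, Sum.inr b => S.inc p b
  | Sum.inr b, Sum.inl p => S.inc p b
  | _, _ => False

/-- `c` is a `k`-chain from `u` to `v`: a list of `k+1` elements, starting at `u`,
ending at `v`, with consecutive elements incident. -/
def IsNChain (S : IncStruct P B) (k : ℕ) (u v : P ⊕ B) (c : List (P ⊕ B)) : Prop :=
  c.length = k + 1 ∧ c.head? = some u ∧ c.getLast? = some v ∧ c.Chain' S.adj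

/-- Distance between two elements of an incidence structure: the least length of a
chain from `u` to `v`, or `∞` if there is none. -/
noncomputable def dist (S : IncStruct P B) (u v : P ⊕ B) : ℕ∞ :=
  sInf {n : ℕ∞ | ∃ (k : ℕ) (c : List (P ⊕ B)), n = (k : ℕ∞) ∧ S.IsNChain k u v c}

/-- A linear space: two distinct points lie on a unique common line, every line has
at least two points, and some point-line pair is non-incident. -/
def IsLinearSpace (S : IncStruct P B) : Prop :=
  (∀ p q : P, p ≠ q → ∃! b : B, S.inc p b ∧ S.inc q b) ∧
  (∀ b : B, ∃ p q : P, p ≠ q ∧ S.inc p b ∧ S.inc q b) ∧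
  (∃ (p : P) (b : B), ¬ S.inc p b)

/-- A generalized quadrangle: all distances are at most `4`, and whenever
`d(u,v) = k < 4` there is a unique `k`-chain from `u` to `v`. -/
def IsGQ (S : IncStruct P B) : Prop :=
  (∀ u v : P ⊕ B, S.dist u v ≤ 4) ∧
  ∀ (u v : P ⊕ B) (k : ℕ), k < 4 → S.dist u v = (k : ℕ∞) →
    ∃! c : List (P ⊕ B), S.IsNChain k u v c

end IncStruct

section ConstructionAdd

variable {P B G : Type*} [AddGroup G]

/-- Additive version of the incidence of Construction 𝔐. -/
def MincAdd (S : IncStruct P B) (φ : B → P → G) (Λ : Type*) [AddAction G Λ] :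
    P ⊕ B × Λ → P × Λ → Prop
  | Sum.inl q, (p, _) => q = p
  | Sum.inr (b, l), (p, m) => S.inc p b ∧ m = φ b p +ᵥ l

/-- The incidence structure 𝔐(Γ,φ) for an additive gain group. -/
def MStructAdd (S : IncStruct P B) (φ : B → P → G) (Λ : Type*) [AddAction G Λ] :
    IncStruct (P ⊕ B × Λ) (P × Λ) := ⟨MincAdd S φ Λ⟩

end ConstructionAdd

section Affine

variable {F : Type*} [Field F]

/-- Incidence in the affine plane over `F`: lines are `Sum.inl b` (the vertical line
`L_b`) and `Sum.inr (m, b)` (the line `L_{m,b}` with slope `m` and `y`-intercept `b`). -/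
def affInc (p : F × F) : F ⊕ F × F → Prop
  | Sum.inl b => p.1 = b
  | Sum.inr (m, b) => p.2 = m * p.1 + b

/-- The affine plane over `F` as an incidence structure. -/
def affPlane (F : Type*) [Field F] : IncStruct (F × F) (F ⊕ F × F) := ⟨fun p L => affInc p L⟩

/-- The gain function: `φ({L_b,(b,y)}) = -b*y` and `φ({L_{m,b},(x,mx+b)}) = x*b`. -/
def affGain : F ⊕ F × F → F × F → F
  | Sum.inl b, p => -(b * p.2)
  | Sum.inr (_, b), p => p.1 * b

/-- The unique line through two distinct points of the affine plane. -/
noncomputable def lineThrough (p q : F × F) : F ⊕ F × F :=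
  if p.1 = q.1 then Sum.inl p.1
  else Sum.inr ((p.2 - q.2) / (p.1 - q.1), q.2 - (p.2 - q.2) / (p.1 - q.1) * q.1)

/-- `ρ_{L,p}(q) = φ(Mp) - φ(Mq) + φ(Lq)`, where `M` is the line through `p` and `q`. -/
noncomputable def rhoAff (L : F ⊕ F × F) (p q : F × F) : F :=
  affGain (lineThrough p q) p - affGain (lineThrough p q) q + affGain L q

end Affine

namespace IncStruct

variable {P B : Type*} {S : IncStruct P B}

def Collinear (S : IncStruct P B) (p q : P) : Prop := ∃ b, S.inc p b ∧ S.inc q b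

def IsPartialLinear (S : IncStruct P B) : Prop :=
  ∀ ⦃p q : P⦄ ⦃b b' : B⦄, p ≠ q → S.inc p b → S.inc q b → S.inc p b' → S.inc q b' → b = b'

def HasUniqueProjection (S : IncStruct P B) : Prop :=
  ∀ ⦃p : P⦄ ⦃b : B⦄, ¬ S.inc p b → ∃! q, S.inc q b ∧ S.Collinear p q

theorem adj_comm {u v : P ⊕ B} : S.adj u v ↔ S.adj v u := by
  rcases u with p | b <;> rcases v with q | b' <;> rfl

@[simp] theorem adj_inl_inr {p : P} {b : B} : S.adj (.inl p) (.inr b) ↔ S.inc p b := Iff.rfl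
@[simp] theorem adj_inr_inl {p : P} {b : B} : S.adj (.inr b) (.inl p) ↔ S.inc p b := Iff.rfl
@[simp] theorem not_adj_inl_inl {p q : P} : ¬ S.adj (.inl p) (.inl q) := id
@[simp] theorem not_adj_inr_inr {b b' : B} : ¬ S.adj (.inr b) (.inr b') := id

theorem isNChain_zero_iff {u v : P ⊕ B} {c : List (P ⊕ B)} :
    S.IsNChain 0 u v c ↔ c = [u] ∧ u = v := by
  constructor
  · rintro ⟨hl, hh, hg, -⟩
    rcases c with _ | ⟨a, _ | ⟨b, c⟩⟩ <;> simp_all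
  · rintro ⟨rfl, rfl⟩
    exact ⟨rfl, rfl, rfl, List.isChain_singleton u⟩

theorem isNChain_succ_iff {k : ℕ} {u v : P ⊕ B} {c : List (P ⊕ B)} :
    S.IsNChain (k + 1) u v c ↔ ∃ w c', c = u :: c' ∧ S.adj u w ∧ S.IsNChain k w v c' := by
  constructor
  · rintro ⟨hl, hh, hg, hc⟩
    rcases c with _ | ⟨a, _ | ⟨w, c'⟩⟩
    · simp at hl
    · simp at hl
    · simp only [List.head?_cons, Option.some.injEq] at hh
      subst hh
      obtain ⟨huw, hc⟩ := List.isChain_cons_cons.mp hc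
      refine ⟨w, w :: c', rfl, huw, by simpa using hl, rfl, ?_, hc⟩
      rwa [List.getLast?_cons_cons] at hg
  · rintro ⟨w, c', rfl, huw, hl, hh, hg, hc⟩
    rcases c' with _ | ⟨w', c'⟩
    · simp at hl
    · simp only [List.head?_cons, Option.some.injEq] at hh
      subst hh
      refine ⟨by simpa using hl, rfl, by rwa [List.getLast?_cons_cons], ?_⟩
      exact List.IsChain.cons_cons huw hc

theorem isNChain_one_iff {u v : P ⊕ B} {c : List (P ⊕ B)} :
    S.IsNChain 1 u v c ↔ c = [u, v] ∧ S.adj u v := by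
  simp [isNChain_succ_iff, isNChain_zero_iff]

theorem isNChain_two_iff {u v : P ⊕ B} {c : List (P ⊕ B)} :
    S.IsNChain 2 u v c ↔ ∃ w, c = [u, w, v] ∧ S.adj u w ∧ S.adj w v := by
  simp [isNChain_succ_iff, isNChain_zero_iff]

theorem isNChain_three_iff {u v : P ⊕ B} {c : List (P ⊕ B)} :
    S.IsNChain 3 u v c ↔ ∃ a b, c = [u, a, b, v] ∧ S.adj u a ∧ S.adj a b ∧ S.adj b v := by
  simp [isNChain_succ_iff, isNChain_zero_iff]

theorem IsNChain.reverse {k : ℕ} {u v : P ⊕ B} {c : List (P ⊕ B)}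
    (h : S.IsNChain k u v c) : S.IsNChain k v u c.reverse := by
  obtain ⟨hl, hh, hg, hc⟩ := h
  refine ⟨by simpa using hl, by simpa [List.head?_reverse] using hg,
    by simpa [List.getLast?_reverse] using hh, ?_⟩
  exact List.isChain_reverse.mpr (List.IsChain.imp (fun _ _ => adj_comm.mp) hc)

theorem IsNChain.snoc {k : ℕ} {u w v : P ⊕ B} {c : List (P ⊕ B)}
    (h : S.IsNChain k u w c) (hwv : S.adj w v) : S.IsNChain (k + 1) u v (c ++ [v]) := by
  induction k generalizing u c with
  | zero =>
    obtain ⟨rfl, rfl⟩ := isNChain_zero_iff.mp h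
    exact isNChain_one_iff.mpr ⟨rfl, hwv⟩
  | succ k ih =>
    obtain ⟨a, c', rfl, hua, hc'⟩ := isNChain_succ_iff.mp h
    exact isNChain_succ_iff.mpr ⟨a, c' ++ [v], rfl, hua, ih hc'⟩

theorem dist_le_of_isNChain {k : ℕ} {u v : P ⊕ B} {c : List (P ⊕ B)}
    (h : S.IsNChain k u v c) : S.dist u v ≤ k :=
  sInf_le ⟨k, c, rfl, h⟩

theorem exists_isNChain_of_dist_eq {k : ℕ} {u v : P ⊕ B} (h : S.dist u v = k) :
    ∃ c, S.IsNChain k u v c := by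
  set A := {n : ℕ∞ | ∃ (j : ℕ) (c : List (P ⊕ B)), n = j ∧ S.IsNChain j u v c}
  change sInf A = k at h
  have hA : A.Nonempty := by
    rw [Set.nonempty_iff_ne_empty]
    intro hA
    rw [hA, sInf_empty] at h
    exact ENat.top_ne_natCast k h
  obtain ⟨j, c, hj, hc⟩ := csInf_mem hA
  obtain rfl : j = k := by exact_mod_cast hj.symm.trans h
  exact ⟨c, hc⟩

theorem dist_comm (u v : P ⊕ B) : S.dist u v = S.dist v u := by
  unfold dist
  congr 1
  ext n
  constructor <;> rintro ⟨j, c, rfl, hc⟩ <;> exact ⟨j, c.reverse, rfl, hc.reverse⟩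

theorem dist_le_dist_add_one {u w v : P ⊕ B} (hwv : S.adj w v) :
    S.dist u v ≤ S.dist u w + 1 := by
  cases hd : S.dist u w using ENat.recTopCoe with
  | top => simp
  | coe k =>
    obtain ⟨c, hc⟩ := exists_isNChain_of_dist_eq hd
    exact_mod_cast dist_le_of_isNChain (hc.snoc hwv)

theorem IsPartialLinear.eq_of_adj_of_adj (hS : S.IsPartialLinear) {u v w w' : P ⊕ B}
    (huv : u ≠ v) (huw : S.adj u w) (hwv : S.adj w v) (huw' : S.adj u w') (hw'v : S.adj w' v) :
    w = w' := by
  rcases u with p | b <;> rcases v with q | b' <;> rcases w with r | m <;>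
    rcases w' with r' | m' <;>
    simp only [adj_inl_inr, adj_inr_inl, not_adj_inl_inl, not_adj_inr_inr, Sum.inl.injEq,
      Sum.inr.injEq] at huw hwv huw' hw'v ⊢
  · exact hS (fun h => huv (congrArg _ h)) huw hwv huw' hw'v
  · by_contra hrr
    exact huv (congrArg _ (hS hrr huw huw' hwv hw'v))

theorem HasUniqueProjection.dist_inl_inr_le_three (hproj : S.HasUniqueProjection) (p : P)
    (b : B) : S.dist (.inl p) (.inr b) ≤ 3 := by
  by_cases hpb : S.inc p b
  · calc S.dist (.inl p) (.inr b) ≤ (1 : ℕ) :=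
          dist_le_of_isNChain (isNChain_one_iff.mpr ⟨rfl, hpb⟩)
      _ ≤ 3 := by norm_num
  · obtain ⟨q, ⟨hqb, m, hpm, hqm⟩, -⟩ := hproj hpb
    exact dist_le_of_isNChain (isNChain_three_iff.mpr ⟨.inr m, .inl q, rfl, hpm, hqm, hqb⟩)

theorem HasUniqueProjection.dist_le_four (hproj : S.HasUniqueProjection)
    (hpoint : ∀ p : P, ∃ b, S.inc p b) (hline : ∀ b : B, ∃ p, S.inc p b) (u v : P ⊕ B) :
    S.dist u v ≤ 4 := by
  rcases u with p | b <;> rcases v with q | b'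
  · obtain ⟨b, hqb⟩ := hpoint q
    calc S.dist (.inl p) (.inl q) ≤ S.dist (.inl p) (.inr b) + 1 :=
          dist_le_dist_add_one (adj_inr_inl.mpr hqb)
      _ ≤ 3 + 1 := by gcongr; exact hproj.dist_inl_inr_le_three p b
      _ = 4 := by norm_num
  · exact (hproj.dist_inl_inr_le_three p b').trans (by norm_num)
  · rw [dist_comm]
    exact (hproj.dist_inl_inr_le_three q b).trans (by norm_num)
  · obtain ⟨p, hpb⟩ := hline b
    rw [dist_comm]
    calc S.dist (.inr b') (.inr b) ≤ S.dist (.inr b') (.inl p) + 1 :=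
          dist_le_dist_add_one (adj_inl_inr.mpr hpb)
      _ ≤ 3 + 1 := by rw [dist_comm]; gcongr; exact hproj.dist_inl_inr_le_three p b'
      _ = 4 := by norm_num

theorem isNChain_three_inl_inr_unique (hS : S.IsPartialLinear) (hproj : S.HasUniqueProjection)
    {p : P} {b : B} {c c' : List (P ⊕ B)} (hpb : ¬ S.inc p b)
    (hc : S.IsNChain 3 (.inl p) (.inr b) c) (hc' : S.IsNChain 3 (.inl p) (.inr b) c') :
    c = c' := by
  obtain ⟨a, w, rfl, hpa, haw, hwb⟩ := isNChain_three_iff.mp hc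
  obtain ⟨a', w', rfl, hpa', haw', hwb'⟩ := isNChain_three_iff.mp hc'
  rcases a with _ | m <;> rcases w with q | _ <;>
    simp only [adj_inl_inr, adj_inr_inl, not_adj_inl_inl, not_adj_inr_inr] at hpa haw hwb
  rcases a' with _ | m' <;> rcases w' with q' | _ <;>
    simp only [adj_inl_inr, adj_inr_inl, not_adj_inl_inl, not_adj_inr_inr] at hpa' haw' hwb'
  obtain rfl : q = q' := (hproj hpb).unique ⟨hwb, m, hpa, haw⟩ ⟨hwb', m', hpa', haw'⟩
  have hpq : p ≠ q := fun h => hpb (h ▸ hwb)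
  obtain rfl : m = m' := hS hpq hpa haw hpa' haw'
  rfl

theorem isGQ_of_hasUniqueProjection (hS : S.IsPartialLinear) (hproj : S.HasUniqueProjection)
    (hpoint : ∀ p : P, ∃ b, S.inc p b) (hline : ∀ b : B, ∃ p, S.inc p b) : S.IsGQ := by
  refine ⟨hproj.dist_le_four hpoint hline, fun u v k hk hd => ?_⟩
  obtain ⟨c, hc⟩ := exists_isNChain_of_dist_eq hd
  have hmin : ∀ {j : ℕ} {c'}, S.IsNChain j u v c' → k ≤ j := fun h =>
    by exact_mod_cast hd ▸ dist_le_of_isNChain h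
  refine ⟨c, hc, fun c' hc' => ?_⟩
  interval_cases k
  · rw [(isNChain_zero_iff.mp hc').1, (isNChain_zero_iff.mp hc).1]
  · rw [(isNChain_one_iff.mp hc').1, (isNChain_one_iff.mp hc).1]
  · have huv : u ≠ v := fun h => by
      have := hmin (isNChain_zero_iff.mpr ⟨rfl, h⟩); omega
    obtain ⟨w, rfl, huw, hwv⟩ := isNChain_two_iff.mp hc
    obtain ⟨w', rfl, huw', hw'v⟩ := isNChain_two_iff.mp hc'
    rw [hS.eq_of_adj_of_adj huv huw' hw'v huw hwv]
  · have huv : ¬ S.adj u v := fun h => by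
      have := hmin (isNChain_one_iff.mpr ⟨rfl, h⟩); omega
    obtain ⟨a, w, rfl, hua, haw, hwv⟩ := isNChain_three_iff.mp hc
    rcases u with p | b <;> rcases v with q | b' <;>
      rcases a with _ | _ <;> rcases w with _ | _ <;>
      simp only [adj_inl_inr, adj_inr_inl, not_adj_inl_inl, not_adj_inr_inr] at hua haw hwv huv
    · exact isNChain_three_inl_inr_unique hS hproj huv hc' hc
    · have := isNChain_three_inl_inr_unique hS hproj huv hc'.reverse hc.reverse
      simpa using congrArg List.reverse this

end IncStruct

namespace MStructAdd

variable {P B G Λ : Type*} [AddGroup G] [AddAction G Λ] {S : IncStruct P B} {φ : B → P → G}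

@[simp] theorem inc_inl {q p : P} {μ : Λ} :
    (MStructAdd S φ Λ).inc (.inl q) (p, μ) ↔ q = p := Iff.rfl

@[simp] theorem inc_inr {L : B} {l : Λ} {p : P} {μ : Λ} :
    (MStructAdd S φ Λ).inc (.inr (L, l)) (p, μ) ↔ S.inc p L ∧ μ = φ L p +ᵥ l := Iff.rfl

@[simp] theorem collinear_inl_inl {p q : P} :
    (MStructAdd S φ Λ).Collinear (.inl p) (.inl q) ↔ p = q ∧ Nonempty Λ := by
  constructor
  · rintro ⟨⟨r, s⟩, rfl, rfl⟩
    exact ⟨rfl, ⟨s⟩⟩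
  · rintro ⟨rfl, ⟨s⟩⟩
    exact ⟨(p, s), rfl, rfl⟩

@[simp] theorem collinear_inl_inr {p : P} {M : B} {m : Λ} :
    (MStructAdd S φ Λ).Collinear (.inl p) (.inr (M, m)) ↔ S.inc p M := by
  constructor
  · rintro ⟨⟨r, s⟩, rfl, hr, -⟩
    exact hr
  · intro hp
    exact ⟨(p, φ M p +ᵥ m), rfl, hp, rfl⟩

@[simp] theorem collinear_inr_inl {L : B} {l : Λ} {q : P} :
    (MStructAdd S φ Λ).Collinear (.inr (L, l)) (.inl q) ↔ S.inc q L := by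
  constructor
  · rintro ⟨⟨r, s⟩, ⟨hr, -⟩, rfl⟩
    exact hr
  · intro hq
    exact ⟨(q, φ L q +ᵥ l), ⟨hq, rfl⟩, rfl⟩

@[simp] theorem collinear_inr_inr {L M : B} {l m : Λ} :
    (MStructAdd S φ Λ).Collinear (.inr (L, l)) (.inr (M, m)) ↔
      ∃ r, S.inc r L ∧ S.inc r M ∧ φ L r +ᵥ l = φ M r +ᵥ m := by
  constructor
  · rintro ⟨⟨r, s⟩, ⟨hrL, rfl⟩, hrM, hs⟩
    exact ⟨r, hrL, hrM, hs⟩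
  · rintro ⟨r, hrL, hrM, hr⟩
    exact ⟨(r, φ L r +ᵥ l), ⟨hrL, rfl⟩, hrM, hr⟩

theorem isPartialLinear (hS : S.IsPartialLinear) : (MStructAdd S φ Λ).IsPartialLinear := by
  intro x y z z' hxy hxz hyz hxz' hyz'
  obtain ⟨r, s⟩ := z
  obtain ⟨r', s'⟩ := z'
  rcases x with p | ⟨L, l⟩ <;> rcases y with q | ⟨M, m⟩ <;> simp only [inc_inl, inc_inr] at *
  · exact absurd (congrArg _ (hxz.trans hyz.symm)) hxy
  · subst hxz hxz'
    rw [hyz.2, hyz'.2]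
  · subst hyz hyz'
    rw [hxz.2, hxz'.2]
  · by_cases hrr : r = r'
    · subst hrr
      rw [hxz.2, hxz'.2]
    · obtain rfl : L = M := hS hrr hxz.1 hxz'.1 hyz.1 hyz'.1
      obtain rfl : l = m := (vadd_left_cancel_iff _).mp (hxz.2.symm.trans hyz.2)
      exact absurd rfl hxy

theorem existsUnique_collinear_inl (hjoin : ∀ p q : P, p ≠ q → ∃! b, S.inc p b ∧ S.inc q b)
    {p q : P} (hpq : p ≠ q) (μ : Λ) :
    ∃! y, (MStructAdd S φ Λ).inc y (q, μ) ∧ (MStructAdd S φ Λ).Collinear (.inl p) y := by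
  obtain ⟨M, ⟨hpM, hqM⟩, hM⟩ := hjoin p q hpq
  refine ⟨.inr (M, -φ M q +ᵥ μ), ⟨⟨hqM, (vadd_neg_vadd _ _).symm⟩, collinear_inl_inr.mpr hpM⟩, ?_⟩
  rintro (r | ⟨M', m'⟩) ⟨hinc, hcol⟩ <;>
    simp only [inc_inl, inc_inr, collinear_inl_inl, collinear_inl_inr] at hinc hcol
  · exact absurd (hcol.1.trans hinc) hpq
  · obtain rfl := hM M' ⟨hcol, hinc.1⟩
    rw [hinc.2, neg_vadd_vadd]

theorem existsUnique_collinear_inr_of_inc (hS : S.IsPartialLinear) {L : B} {l : Λ} {q : P}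
    {μ : Λ} (hqL : S.inc q L) (hμ : μ ≠ φ L q +ᵥ l) :
    ∃! y, (MStructAdd S φ Λ).inc y (q, μ) ∧ (MStructAdd S φ Λ).Collinear (.inr (L, l)) y := by
  refine ⟨.inl q, ⟨rfl, collinear_inr_inl.mpr hqL⟩, ?_⟩
  rintro (r | ⟨M, m⟩) ⟨hinc, hcol⟩ <;>
    simp only [inc_inl, inc_inr, collinear_inr_inr] at hinc hcol
  · rw [hinc]
  · exfalso
    obtain ⟨r, hrL, hrM, hr⟩ := hcol
    by_cases hrq : r = q
    · subst hrq
      exact hμ (hinc.2.trans hr.symm)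
    · obtain rfl : L = M := hS hrq hrL hqL hrM hinc.1
      obtain rfl : l = m := (vadd_left_cancel_iff _).mp hr
      exact hμ hinc.2

theorem existsUnique_collinear_inr_of_not_inc (hS : S.IsPartialLinear) {L : B} {l : Λ} {q : P}
    {μ : Λ} (hqL : ¬ S.inc q L)
    (hρ : ∃! r, S.inc r L ∧ ∃ M, S.inc r M ∧ S.inc q M ∧ φ L r +ᵥ l = φ M r +ᵥ (-φ M q +ᵥ μ)) :
    ∃! y, (MStructAdd S φ Λ).inc y (q, μ) ∧ (MStructAdd S φ Λ).Collinear (.inr (L, l)) y := by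
  obtain ⟨r, ⟨hrL, M, hrM, hqM, hr⟩, hr_unique⟩ := hρ
  refine ⟨.inr (M, -φ M q +ᵥ μ), ⟨⟨hqM, (vadd_neg_vadd _ _).symm⟩,
    collinear_inr_inr.mpr ⟨r, hrL, hrM, hr⟩⟩, ?_⟩
  rintro (q' | ⟨M', m'⟩) ⟨hinc, hcol⟩ <;>
    simp only [inc_inl, inc_inr, collinear_inr_inl, collinear_inr_inr] at hinc hcol
  · exact absurd (hinc ▸ hcol) hqL
  · obtain ⟨r', hr'L, hr'M', hr'⟩ := hcol
    have hm' : m' = -φ M' q +ᵥ μ := by rw [hinc.2, neg_vadd_vadd]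
    obtain rfl : r' = r := hr_unique r' ⟨hr'L, M', hr'M', hinc.1, hm' ▸ hr'⟩
    have hrq : r' ≠ q := fun h => hqL (h ▸ hr'L)
    obtain rfl : M' = M := hS hrq hr'M' hinc.1 hrM hqM
    rw [hm']

theorem isGQ [Nonempty Λ] (hjoin : ∀ p q : P, p ≠ q → ∃! b, S.inc p b ∧ S.inc q b)
    (hline : ∀ b : B, ∃ p, S.inc p b)
    (hρ : ∀ ⦃L : B⦄ ⦃q : P⦄, ¬ S.inc q L → ∀ l μ : Λ,
      ∃! r, S.inc r L ∧ ∃ M, S.inc r M ∧ S.inc q M ∧ φ L r +ᵥ l = φ M r +ᵥ (-φ M q +ᵥ μ)) :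
    (MStructAdd S φ Λ).IsGQ := by
  have hS : S.IsPartialLinear := fun p q _ _ hpq hpb hqb hpb' hqb' =>
    (hjoin p q hpq).unique ⟨hpb, hqb⟩ ⟨hpb', hqb'⟩
  refine IncStruct.isGQ_of_hasUniqueProjection (isPartialLinear hS) ?_ ?_ ?_
  · rintro (p | ⟨L, l⟩) ⟨q, μ⟩ hxz
    · exact existsUnique_collinear_inl hjoin hxz μ
    · by_cases hqL : S.inc q L
      · exact existsUnique_collinear_inr_of_inc hS hqL fun h => hxz ⟨hqL, h⟩
      · exact existsUnique_collinear_inr_of_not_inc hS hqL (hρ hqL l μ)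
  · rintro (p | ⟨L, l⟩)
    · exact ⟨(p, Classical.arbitrary Λ), rfl⟩
    · obtain ⟨p, hp⟩ := hline L
      exact ⟨(p, φ L p +ᵥ l), hp, rfl⟩
  · rintro ⟨p, μ⟩
    exact ⟨.inl p, rfl⟩

end MStructAdd

section AffinePlane

variable {F : Type*} [Field F]

def ptOn : F ⊕ F × F → F → F × F
  | Sum.inl b, t => (b, t)
  | Sum.inr (m, c), t => (t, m * t + c)

theorem affInc_ptOn (L : F ⊕ F × F) (t : F) : affInc (ptOn L t) L := by
  rcases L with b | ⟨m, c⟩ <;> simp [ptOn, affInc]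

theorem exists_ptOn_eq {p : F × F} {L : F ⊕ F × F} (h : affInc p L) : ∃ t, ptOn L t = p := by
  rcases L with b | ⟨m, c⟩ <;> obtain ⟨x, y⟩ := p <;> simp only [affInc] at h
  · exact ⟨y, by simp [ptOn, h]⟩
  · exact ⟨x, by simp [ptOn, h]⟩

theorem affInc_lineThrough_left (p q : F × F) : affInc p (lineThrough p q) := by
  by_cases h : p.1 = q.1
  · simp [lineThrough, h, affInc]
  · have h' : p.1 - q.1 ≠ 0 := sub_ne_zero.mpr h
    simp only [lineThrough, if_neg h, affInc]
    field_simp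
    ring

theorem affInc_lineThrough_right (p q : F × F) : affInc q (lineThrough p q) := by
  by_cases h : p.1 = q.1
  · simp [lineThrough, h, affInc]
  · simp only [lineThrough, if_neg h, affInc]
    ring

theorem eq_lineThrough {p q : F × F} {L : F ⊕ F × F} (hpq : p ≠ q)
    (hp : affInc p L) (hq : affInc q L) : L = lineThrough p q := by
  rcases L with b | ⟨m, c⟩ <;> simp only [affInc] at hp hq
  · rw [lineThrough, if_pos (hp.trans hq.symm), hp]
  · have hx : p.1 ≠ q.1 := fun h => hpq (Prod.ext h (by rw [hp, hq, h]))
    have hm : (p.2 - q.2) / (p.1 - q.1) = m := by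
      rw [div_eq_iff (sub_ne_zero.mpr hx), hp, hq]
      ring
    rw [lineThrough, if_neg hx, hm, hq]
    congr 2
    ring

theorem existsUnique_affInc_affInc {p q : F × F} (hpq : p ≠ q) :
    ∃! L, affInc p L ∧ affInc q L :=
  ⟨lineThrough p q, ⟨affInc_lineThrough_left p q, affInc_lineThrough_right p q⟩,
    fun _ ⟨hp, hq⟩ => eq_lineThrough hpq hp hq⟩

theorem exists_rhoAff_ptOn_eq_mul_add {L : F ⊕ F × F} {q : F × F} (hq : ¬ affInc q L) :
    ∃ α β : F, α ≠ 0 ∧ ∀ t, rhoAff L q (ptOn L t) = α * t + β := by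
  obtain ⟨x, y⟩ := q
  rcases L with b | ⟨m, c⟩ <;> simp only [affInc] at hq
  · refine ⟨x - b, -(b * y), sub_ne_zero.mpr hq, fun t => ?_⟩
    have hxb : x - b ≠ 0 := sub_ne_zero.mpr hq
    simp only [rhoAff, lineThrough, ptOn, hq, ↓reduceIte, affGain]
    field_simp
    ring
  · refine ⟨m * x + c - y, x * c, sub_ne_zero.mpr (Ne.symm hq), fun t => ?_⟩
    by_cases hxt : x = t
    · subst hxt
      simp only [rhoAff, lineThrough, ptOn, ↓reduceIte, affGain]
      ring
    · have hxt' : x - t ≠ 0 := sub_ne_zero.mpr hxt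
      simp only [rhoAff, lineThrough, ptOn, hxt, ↓reduceIte, affGain]
      field_simp
      ring

theorem existsUnique_affInc_rhoAff_eq {L : F ⊕ F × F} {q : F × F} (hq : ¬ affInc q L) (g : F) :
    ∃! r, affInc r L ∧ rhoAff L q r = g := by
  obtain ⟨α, β, hα, hρ⟩ := exists_rhoAff_ptOn_eq_mul_add hq
  refine ⟨ptOn L ((g - β) / α), ⟨affInc_ptOn _ _, by rw [hρ]; field_simp; ring⟩, ?_⟩
  rintro r ⟨hr, hrg⟩
  obtain ⟨t, rfl⟩ := exists_ptOn_eq hr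
  rw [hρ] at hrg
  congr 1
  field_simp
  linear_combination hrg

theorem existsUnique_affGain_eq {L : F ⊕ F × F} {q : F × F} (hq : ¬ affInc q L) (l μ : F) :
    ∃! r, affInc r L ∧ ∃ M, affInc r M ∧ affInc q M ∧
      affGain L r + l = affGain M r + (-affGain M q + μ) := by
  refine (existsUnique_congr fun r => and_congr_right fun hr => ?_).mpr
    (existsUnique_affInc_rhoAff_eq hq (μ - l))
  have hqr : q ≠ r := fun h => hq (h ▸ hr)
  constructor
  · rintro ⟨M, hrM, hqM, h⟩
    rw [rhoAff, ← eq_lineThrough hqr hqM hrM]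
    linear_combination h
  · intro h
    refine ⟨lineThrough q r, affInc_lineThrough_right q r, affInc_lineThrough_left q r, ?_⟩
    rw [rhoAff] at h
    linear_combination h

end AffinePlane

/-- for the affine plane over a field `F` with gain function
`φ(L_b,(b,y)) = -by`, `φ(L_{m,b},(x,mx+b)) = xb` valued in `(F,+)` acting on `F` by
addition, Construction 𝔐 yields a generalized quadrangle. -/
theorem affine_MStruct_isGQ (F : Type*) [Field F] :
    (MStructAdd (affPlane F) (fun L p => affGain L p) F).IsGQ :=
  MStructAdd.isGQ (fun _ _ => existsUnique_affInc_affInc) (fun L => ⟨ptOn L 0, affInc_ptOn L 0⟩)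
    fun _ _ hq => existsUnique_affGain_eq hq
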